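/- Let K be a field of characteristic zero and let Q be a finite set of cardinality n carrying two partial orders ≼ and ≼' such that for all distinct a, b ∈ Q, a and b are comparable for ≼ if and only if they are incomparable for ≼'. Then the dimension of the relation space R_{(Q,≼')} equals 4·int(Q,≼') − 3·n, which also equals the dimension of the annihilator R_{(Q,≼)}^⊥ of R_{(Q,≼)} with respect to the bilinear form ⟨·,·⟩. -/

import Mathlib

open scoped Classical

/-- The minimum of two comparable elements with respect to an explicit partial order. -/
noncomputable def pminP {Q : Type*} (P : PartialOrder Q) (a b : Q) : Q :=
  if P.le a b then a else b

/-- The standard basis vector `e(a,i,b)` of `V = (Q × {1,2} × Q) → K` (with `0 : Fin 2`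
encoding position `1` and `1 : Fin 2` encoding position `2`). -/
noncomputable def e (K : Type*) [Field K] {Q : Type*} (a : Q) (i : Fin 2) (b : Q) :
    (Q × Fin 2 × Q) → K :=
  fun p => if p = (a, i, b) then 1 else 0

/-- The space of relations `R_(Q,≼)` for an explicit partial order `≼` on `Q`: the span
of `e(a,1,b) − e(a↑b,2,a↑b)` and `e(a↑b,1,a↑b) − e(a,2,b)` for `≼`-comparable `a, b`. -/
noncomputable def relSpaceP (K : Type*) [Field K] {Q : Type*} (P : PartialOrder Q) :
    Submodule K ((Q × Fin 2 × Q) → K) :=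
  Submodule.span K
    {x | ∃ a b : Q, (P.le a b ∨ P.le b a) ∧
      (x = e K a 0 b - e K (pminP P a b) 1 (pminP P a b) ∨
       x = e K (pminP P a b) 0 (pminP P a b) - e K a 1 b)}

/-- The bilinear form on `V` with `⟨e(a,i,b), e(a',i',b')⟩ = 1` if `(a,b) = (a',b')` and
`i = i' = 1`, `= −1` if `(a,b) = (a',b')` and `i = i' = 2`, and `0` otherwise. -/
noncomputable def bform {K : Type*} [Field K] {Q : Type*} [Fintype Q]
    (u w : (Q × Fin 2 × Q) → K) : K :=
  ∑ a : Q, ∑ b : Q, (u (a, 0, b) * w (a, 0, b) - u (a, 1, b) * w (a, 1, b))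

lemma bform_add {K : Type*} [Field K] {Q : Type*} [Fintype Q]
    (r u v : (Q × Fin 2 × Q) → K) :
    bform r (u + v) = bform r u + bform r v := by
  unfold bform
  rw [← Finset.sum_add_distrib]
  refine Finset.sum_congr rfl fun a _ => ?_
  rw [← Finset.sum_add_distrib]
  refine Finset.sum_congr rfl fun b _ => ?_
  simp only [Pi.add_apply]
  ring

lemma bform_smul {K : Type*} [Field K] {Q : Type*} [Fintype Q]
    (c : K) (r v : (Q × Fin 2 × Q) → K) :
    bform r (c • v) = c * bform r v := by
  unfold bform
  rw [Finset.mul_sum]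
  refine Finset.sum_congr rfl fun a _ => ?_
  rw [Finset.mul_sum]
  refine Finset.sum_congr rfl fun b _ => ?_
  simp only [Pi.smul_apply, smul_eq_mul]
  ring

/-- The annihilator `S^⊥ = {v ∈ V : ⟨r, v⟩ = 0 for all r ∈ S}` of a subspace `S` of `V`
with respect to the bilinear form `⟨·,·⟩`. -/
noncomputable def annih (K : Type*) [Field K] (Q : Type*) [Fintype Q]
    (S : Submodule K ((Q × Fin 2 × Q) → K)) : Submodule K ((Q × Fin 2 × Q) → K) where
  carrier := {v | ∀ r ∈ S, bform r v = 0}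
  add_mem' := by
    intro u v hu hv r hr
    rw [bform_add, hu r hr, hv r hr, add_zero]
  zero_mem' := by
    intro r hr
    simp [bform]
  smul_mem' := by
    intro c v hv r hr
    rw [bform_smul, hv r hr, mul_zero]

/-!
Put `relVec (a,i,b) = e(a,i,b) − e(a↑b,2,a↑b)`. For comparable `a, b` the two generators of
`R_(Q,≼)` are `relVec (a,1,b)` and `relVec (a↑b,1,a↑b) − relVec (a,2,b)`, so `R_(Q,≼)` is spanned
by the `relVec (a,i,b)` with `a, b` comparable. Apart from the zero vectors `relVec (c,2,c)`, each
of these is the only one that is nonzero at its own index `(a,i,b)`, so they are linearly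
independent and `dim R_(Q,≼) = n + 2c_≼ = 4·int(Q,≼) − 3n`, where `c_≼` counts ordered pairs of
distinct comparable elements. The form `⟨·,·⟩` is diagonal with entries `±1`, hence
nondegenerate, so `dim R_(Q,≼)^⊥ = 2n² − n − 2c_≼`, which is `n + 2c_≼'` since
`c_≼ + c_≼' = n² − n`.
-/

open Finset

section Counting

variable {Q : Type*} [Fintype Q]

noncomputable def strictCompPairs (P : PartialOrder Q) : Finset (Q × Q) :=
  {p | p.1 ≠ p.2 ∧ (P.le p.1 p.2 ∨ P.le p.2 p.1)}

lemma card_strictCompPairs (P : PartialOrder Q) :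
    #(strictCompPairs P) =
      ∑ p : Q × Q, if p.1 ≠ p.2 ∧ (P.le p.1 p.2 ∨ P.le p.2 p.1) then 1 else 0 :=
  card_filter _ _

lemma sum_boole_fst_eq_snd : (∑ p : Q × Q, if p.1 = p.2 then 1 else 0) = Fintype.card Q := by
  rw [Fintype.sum_prod_type]
  simp

lemma card_strictCompPairs_add (P : PartialOrder Q) :
    #(strictCompPairs P) + 2 * Fintype.card Q = 2 * Set.ncard {p : Q × Q | P.le p.1 p.2} := by
  let := P
  have hint : Set.ncard {p : Q × Q | p.1 ≤ p.2} =
      ∑ p : Q × Q, if p.1 ≤ p.2 then 1 else 0 := by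
    rw [Set.ncard_eq_toFinset_card', Set.toFinset_ofPred, card_filter]
  have hswap : (∑ p : Q × Q, if p.2 ≤ p.1 then 1 else 0) =
      ∑ p : Q × Q, if p.1 ≤ p.2 then 1 else 0 :=
    Fintype.sum_equiv (Equiv.prodComm Q Q) _ _ fun _ => rfl
  calc #(strictCompPairs P) + 2 * Fintype.card Q
      = ∑ p : Q × Q, ((if p.1 ≠ p.2 ∧ (p.1 ≤ p.2 ∨ p.2 ≤ p.1) then 1 else 0) +
          2 * if p.1 = p.2 then 1 else 0) := by
        rw [sum_add_distrib, ← mul_sum, sum_boole_fst_eq_snd, card_strictCompPairs]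
    _ = ∑ p : Q × Q, ((if p.1 ≤ p.2 then 1 else 0) + if p.2 ≤ p.1 then 1 else 0) := by
        refine sum_congr rfl fun p _ => ?_
        rcases eq_or_ne p.1 p.2 with hp | hp
        · simp [hp]
        · by_cases h₁ : p.1 ≤ p.2 <;> by_cases h₂ : p.2 ≤ p.1
          · exact absurd (le_antisymm h₁ h₂) hp
          all_goals simp [hp, h₁, h₂]
    _ = 2 * Set.ncard {p : Q × Q | p.1 ≤ p.2} := by
        rw [sum_add_distrib, hswap, hint, two_mul]

lemma card_strictCompPairs_add_of_compl {P P' : PartialOrder Q}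
    (h : ∀ a b : Q, a ≠ b → ((P.le a b ∨ P.le b a) ↔ ¬ (P'.le a b ∨ P'.le b a))) :
    #(strictCompPairs P) + #(strictCompPairs P') + Fintype.card Q =
      Fintype.card Q * Fintype.card Q := by
  rw [← Fintype.card_prod, ← sum_boole_fst_eq_snd, Fintype.card_eq_sum_ones (α := Q × Q),
    card_strictCompPairs, card_strictCompPairs, ← sum_add_distrib, ← sum_add_distrib]
  refine sum_congr rfl fun p _ => ?_
  by_cases hp : p.1 = p.2
  · simp [hp]
  · by_cases hc : P.le p.1 p.2 ∨ P.le p.2 p.1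
    · simp [hp, hc, (h _ _ hp).1 hc]
    · simp [hp, hc, not_not.1 (mt (h _ _ hp).2 hc)]

end Counting

lemma linearIndependent_of_apply_eq_single {R ι X : Type*} [Semiring R] [DecidableEq ι]
    {v : ι → X → R} (κ : ι → X)
    (hv : ∀ i j, v j (κ i) = Pi.single (M := fun _ => R) j 1 i) :
    LinearIndependent R v :=
  .of_comp (LinearMap.funLeft R R κ) <| by
    convert Pi.linearIndependent_single_one ι R with j
    exact funext fun i => hv i j

@[simp] lemma pminP_self {Q : Type*} (P : PartialOrder Q) (a : Q) : pminP P a a = a := by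
  simp [pminP]

section RelationFamily

variable (K : Type*) [Field K] {Q : Type*} (P : PartialOrder Q)

noncomputable def relVec (t : Q × Fin 2 × Q) : (Q × Fin 2 × Q) → K :=
  e K t.1 t.2.1 t.2.2 - e K (pminP P t.1 t.2.2) 1 (pminP P t.1 t.2.2)

lemma relVec_mem_relSpaceP {a b : Q} (hab : P.le a b ∨ P.le b a) (i : Fin 2) :
    relVec K P (a, i, b) ∈ relSpaceP K P := by
  have gen₁ : ∀ {a b}, (P.le a b ∨ P.le b a) → relVec K P (a, 0, b) ∈ relSpaceP K P :=
    fun hab => Submodule.subset_span ⟨_, _, hab, .inl rfl⟩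
  match i with
  | 0 => exact gen₁ hab
  | 1 =>
    have gen₂ : e K (pminP P a b) 0 (pminP P a b) - e K a 1 b ∈ relSpaceP K P :=
      Submodule.subset_span ⟨_, _, hab, .inr rfl⟩
    have hmin := gen₁ (a := pminP P a b) (.inl le_rfl)
    convert Submodule.sub_mem _ hmin gen₂ using 1
    simp only [relVec, pminP_self]
    abel

variable [Fintype Q]

def relCoord : Q ⊕ (strictCompPairs P × Fin 2) → Q × Fin 2 × Q
  | .inl a => (a, 0, a)
  | .inr (⟨(a, b), _⟩, i) => (a, i, b)

lemma relCoord_injective : Function.Injective (relCoord P) := by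
  rintro (a | ⟨⟨⟨a, b⟩, hab⟩, i⟩) (a' | ⟨⟨⟨a', b'⟩, hab'⟩, i'⟩) h <;>
    simp only [relCoord, Prod.mk.injEq] at h
  · rw [h.1]
  · exact absurd (h.1.symm.trans h.2.2) (mem_filter.1 hab').2.1
  · exact absurd (h.1.trans h.2.2.symm) (mem_filter.1 hab).2.1
  · obtain ⟨rfl, rfl, rfl⟩ := h
    rfl

lemma relCoord_ne_diag (i : Q ⊕ (strictCompPairs P × Fin 2)) (c : Q) :
    relCoord P i ≠ (c, 1, c) := by
  rcases i with a | ⟨⟨⟨a, b⟩, hab⟩, i⟩ <;> simp only [relCoord, ne_eq, Prod.mk.injEq]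
  · simp
  · rintro ⟨rfl, -, rfl⟩
    exact (mem_filter.1 hab).2.1 rfl

lemma relVec_relCoord_apply (i j : Q ⊕ (strictCompPairs P × Fin 2)) :
    relVec K P (relCoord P j) (relCoord P i) = Pi.single (M := fun _ => K) j 1 i := by
  simp [relVec, e, relCoord_ne_diag, (relCoord_injective P).eq_iff, Pi.single_apply]

lemma linearIndependent_relVec_relCoord : LinearIndependent K (relVec K P ∘ relCoord P) :=
  linearIndependent_of_apply_eq_single (relCoord P) (relVec_relCoord_apply K P)

lemma relVec_mem_span_relCoord {a b : Q} (hab : P.le a b ∨ P.le b a) (i : Fin 2) :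
    relVec K P (a, i, b) ∈ Submodule.span K (Set.range (relVec K P ∘ relCoord P)) := by
  by_cases hne : a = b
  · subst hne
    match i with
    | 0 => exact Submodule.subset_span ⟨.inl a, rfl⟩
    | 1 => simp [relVec]
  · have hmem : (a, b) ∈ strictCompPairs P := mem_filter.2 ⟨mem_univ _, hne, hab⟩
    exact Submodule.subset_span ⟨.inr (⟨(a, b), hmem⟩, i), rfl⟩

lemma span_relVec_relCoord :
    Submodule.span K (Set.range (relVec K P ∘ relCoord P)) = relSpaceP K P := by
  apply le_antisymm
  · rw [Submodule.span_le]
    rintro _ ⟨a | ⟨⟨⟨a, b⟩, hab⟩, i⟩, rfl⟩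
    · exact relVec_mem_relSpaceP K P (.inl le_rfl) 0
    · exact relVec_mem_relSpaceP K P (mem_filter.1 hab).2.2 i
  · rw [relSpaceP, Submodule.span_le]
    rintro _ ⟨a, b, hab, rfl | rfl⟩ <;> rw [SetLike.mem_coe]
    · exact relVec_mem_span_relCoord K P hab 0
    · have hmin := relVec_mem_span_relCoord K P (a := pminP P a b) (.inl le_rfl) 0
      convert Submodule.sub_mem _ hmin (relVec_mem_span_relCoord K P hab 1) using 1
      simp only [relVec, pminP_self]
      abel

lemma finrank_relSpaceP :
    Module.finrank K (relSpaceP K P) = Fintype.card Q + 2 * #(strictCompPairs P) := by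
  rw [← span_relVec_relCoord, finrank_span_eq_card (linearIndependent_relVec_relCoord K P),
    Fintype.card_sum, Fintype.card_prod, Fintype.card_coe, Fintype.card_fin, mul_comm]

end RelationFamily

section Annihilator

variable {K : Type*} [Field K] {Q : Type*} [Fintype Q]

noncomputable def bformSign : Q × Fin 2 × Q → K := fun t => if t.2.1 = 0 then 1 else -1

lemma bform_eq_toBilin' (u w : (Q × Fin 2 × Q) → K) :
    bform u w = (Matrix.diagonal bformSign).toBilin' u w := by
  simp only [bform, Matrix.toBilin'_apply', Matrix.mulVec_diagonal, dotProduct,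
    Fintype.sum_prod_type, Fin.sum_univ_two, bformSign, sum_add_distrib, sum_sub_distrib]
  simp [sub_eq_add_neg]

lemma annih_eq_orthogonal (S : Submodule K ((Q × Fin 2 × Q) → K)) :
    annih K Q S = (Matrix.diagonal (bformSign (K := K) (Q := Q))).toBilin'.orthogonal S := by
  ext v
  simp [annih, bform_eq_toBilin']

lemma finrank_annih (S : Submodule K ((Q × Fin 2 × Q) → K)) :
    Module.finrank K (annih K Q S) =
      2 * (Fintype.card Q * Fintype.card Q) - Module.finrank K S := by
  have hdet : (Matrix.diagonal (bformSign (K := K) (Q := Q))).det ≠ 0 := by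
    rw [Matrix.det_diagonal]
    exact prod_ne_zero_iff.2 fun t _ => by unfold bformSign; split_ifs <;> simp
  rw [annih_eq_orthogonal, LinearMap.BilinForm.finrank_orthogonal
    (LinearMap.BilinForm.nondegenerate_toBilin'_of_det_ne_zero' _ hdet),
    Module.finrank_fintype_fun_eq_card]
  simp only [Fintype.card_prod, Fintype.card_fin]
  ring_nf

end Annihilator

theorem finrank_relSpace_and_annihilator_general {K Q : Type*} [Field K]
    [Fintype Q] (P P' : PartialOrder Q)
    (h : ∀ a b : Q, a ≠ b → ((P.le a b ∨ P.le b a) ↔ ¬ (P'.le a b ∨ P'.le b a))) :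
    Module.finrank K (relSpaceP K P') =
      4 * Set.ncard {p : Q × Q | P'.le p.1 p.2} - 3 * Fintype.card Q ∧
    Module.finrank K (annih K Q (relSpaceP K P)) =
      4 * Set.ncard {p : Q × Q | P'.le p.1 p.2} - 3 * Fintype.card Q := by
  rw [finrank_annih, finrank_relSpaceP, finrank_relSpaceP]
  have hint := card_strictCompPairs_add P'
  have hcompl := card_strictCompPairs_add_of_compl h
  constructor <;> lia

/-- For two complementary partial orders `≼` and `≼'` on a finite set `Q` (distinct
elements are `≼`-comparable iff `≼'`-incomparable, as for a thin forest poset and its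
dual), the dimension of `R_(Q,≼')` equals `4·int(Q,≼') − 3·#Q`, which also equals the
dimension of the annihilator `R_(Q,≼)^⊥` (the space of relations of `As(Q,≼)^!`). -/
theorem finrank_relSpace_and_annihilator {K Q : Type*} [Field K] [CharZero K]
    [Fintype Q] (P P' : PartialOrder Q)
    (h : ∀ a b : Q, a ≠ b → ((P.le a b ∨ P.le b a) ↔ ¬ (P'.le a b ∨ P'.le b a))) :
    Module.finrank K (relSpaceP K P') =
      4 * Set.ncard {p : Q × Q | P'.le p.1 p.2} - 3 * Fintype.card Q ∧
    Module.finrank K (annih K Q (relSpaceP K P)) =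
      4 * Set.ncard {p : Q × Q | P'.le p.1 p.2} - 3 * Fintype.card Q :=
  finrank_relSpace_and_annihilator_general P P' h
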